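/- arXiv:2310.13930 — 8 statements merged into one kernel-verified Lean document; each statement's English description precedes it below -/
import Mathlib

section
/- Let z, i, L be natural numbers with L ≥ 1 and i ≤ z. Then T^i(2^z + L) = T^i(L) + 3^{α_i(L)} · 2^{z−i}, where T^i denotes the i-fold iterate of the shortcut Collatz map T and α_i(L) is the number of indices j < i such that T^j(L) is odd. -/
/-- The shortcut Collatz map: `T x = (3x+1)/2` if `x` is odd, `x/2` if `x` is even. -/
def T (x : ℕ) : ℕ := if Odd x then (3 * x + 1) / 2 else x / 2

/-- `alpha i L` is the number of indices `j < i` such that `T^[j] L` is odd. -/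
def alpha (i L : ℕ) : ℕ := ((Finset.range i).filter (fun j => Odd (T^[j] L))).card

lemma alpha_succ (i L : ℕ) :
    alpha (i + 1) L = alpha i L + if Odd (T^[i] L) then 1 else 0 := by
  unfold alpha
  rw [Finset.range_add_one, Finset.filter_insert]
  split <;> simp [Finset.card_insert_of_notMem]

/-- Adding an even number does not change the parity, so the same branch of `T` is taken. -/
lemma T_add_two_mul (x m : ℕ) :
    T (x + 2 * m) = T x + 3 ^ (if Odd x then 1 else 0) * m := by
  have hpar : Odd (x + 2 * m) ↔ Odd x := by simp [Nat.odd_add]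
  by_cases hx : Odd x
  · simp only [T, if_pos hx, if_pos (hpar.mpr hx)]
    obtain ⟨k, rfl⟩ := hx
    omega
  · simp only [T, if_neg hx, if_neg (mt hpar.mp hx)]
    obtain ⟨k, rfl⟩ := Nat.not_odd_iff_even.mp hx
    omega

/-- The first `i` steps of `T` only see `x` modulo `2 ^ i`; a perturbation by a multiple of
`2 ^ i` is halved at each step and tripled at each odd step. -/
theorem iterate_T_add_two_pow_mul (i x m : ℕ) :
    T^[i] (x + 2 ^ i * m) = T^[i] x + 3 ^ alpha i x * m := by
  induction i generalizing m with
  | zero => simp [alpha]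
  | succ i ih =>
    rw [Function.iterate_succ_apply', Function.iterate_succ_apply', pow_succ, mul_assoc,
      ih, mul_left_comm, T_add_two_mul, alpha_succ, pow_add]
    ring

theorem stmt0_general (z i L : ℕ) (hi : i ≤ z) :
    T^[i] (2 ^ z + L) = T^[i] L + 3 ^ (alpha i L) * 2 ^ (z - i) := by
  rw [← iterate_T_add_two_pow_mul, ← pow_add, Nat.add_sub_cancel' hi, add_comm]

theorem stmt0 (z i L : ℕ) (hL : 1 ≤ L) (hi : i ≤ z) :
    T^[i] (2 ^ z + L) = T^[i] L + 3 ^ (alpha i L) * 2 ^ (z - i) :=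
  stmt0_general z i L hi
end

section
/- (Theorem 2.1, periodicity) Let z ≥ 1 and L ≥ 1 be natural numbers and set M = 2^z + L. Then: (a) for every i < z, T^i(M) ≡ T^i(L) (mod 2); (b) T^z(M) = T^z(L) + 3^{α_z(L)}; and (c) T^z(M) and T^z(L) have opposite parities. -/
lemma T_two_mul_add (c x : ℕ) : T (2 * c + x) = (if Odd x then 3 else 1) * c + T x := by
  have hparity : Odd (2 * c + x) ↔ Odd x := by simp [Nat.odd_iff, Nat.add_mod]
  simp only [T, hparity]
  split_ifs <;> omega

lemma iterate_T_two_pow_mul_add (i c x : ℕ) :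
    T^[i] (2 ^ i * c + x) = 3 ^ alpha i x * c + T^[i] x := by
  induction i generalizing c with
  | zero => simp [alpha]
  | succ i ih =>
    rw [Function.iterate_succ_apply', Function.iterate_succ_apply', pow_succ, mul_assoc, ih,
      mul_left_comm, T_two_mul_add, alpha_succ, pow_add]
    split_ifs <;> ring

theorem stmt1_general (z L M : ℕ) (hM : M = 2 ^ z + L) :
    (∀ i < z, T^[i] M % 2 = T^[i] L % 2) ∧
    T^[z] M = T^[z] L + 3 ^ (alpha z L) ∧
    (Odd (T^[z] M) ↔ ¬ Odd (T^[z] L)) := by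
  subst hM
  have hfinal : T^[z] (2 ^ z + L) = 3 ^ alpha z L + T^[z] L := by
    simpa using iterate_T_two_pow_mul_add z 1 L
  refine ⟨fun i hi => ?_, by rw [hfinal, add_comm], ?_⟩
  · obtain ⟨k, rfl⟩ := Nat.exists_eq_add_of_lt hi
    rw [show 2 ^ (i + k + 1) = 2 ^ i * 2 ^ (k + 1) by rw [← pow_add, add_assoc],
      iterate_T_two_pow_mul_add, pow_succ]
    simp [Nat.add_mod, Nat.mul_mod]
  · rw [hfinal, Nat.odd_add]
    simp [Odd.pow (by decide : Odd 3)]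

theorem stmt1 (z L M : ℕ) (hz : 1 ≤ z) (hL : 1 ≤ L) (hM : M = 2 ^ z + L) :
    (∀ i < z, T^[i] M % 2 = T^[i] L % 2) ∧
    T^[z] M = T^[z] L + 3 ^ (alpha z L) ∧
    (Odd (T^[z] M) ↔ ¬ Odd (T^[z] L)) :=
  stmt1_general z L M hM
end

section
/- (Theorem 2.2, uniqueness of chains) Let n ≥ 1 and let L and M be odd natural numbers with 2^n < L ≤ 2^{n+1} and 2^n < M ≤ 2^{n+1}. If T^i(L) ≡ T^i(M) (mod 2) for every i < n, then L = M. -/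
lemma three_mul_add_one_eq_two_mul_T {x : ℕ} (hx : Odd x) : 3 * x + 1 = 2 * T x := by
  obtain ⟨k, rfl⟩ := hx
  simp only [T, odd_two_mul_add_one, if_true]
  omega

lemma eq_two_mul_T_of_not_odd {x : ℕ} (hx : ¬Odd x) : x = 2 * T x := by
  obtain ⟨k, rfl⟩ := Nat.not_odd_iff_even.mp hx
  simp only [T, hx, if_false]
  omega

lemma modEq_two_pow_succ_of_T_modEq {x y n : ℕ} (hpar : x % 2 = y % 2)
    (hT : T x ≡ T y [MOD 2 ^ n]) : x ≡ y [MOD 2 ^ (n + 1)] := by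
  have h2 : 2 * T x ≡ 2 * T y [MOD 2 ^ (n + 1)] := by
    rw [pow_succ']
    exact hT.mul_left' 2
  by_cases hx : Odd x
  · have hy : Odd y := by rw [Nat.odd_iff] at hx ⊢; omega
    rw [← three_mul_add_one_eq_two_mul_T hx, ← three_mul_add_one_eq_two_mul_T hy] at h2
    have hcop : Nat.Coprime (2 ^ (n + 1)) 3 := Nat.Coprime.pow_left _ (by decide)
    exact Nat.ModEq.cancel_left_of_coprime hcop (h2.add_right_cancel' 1)
  · have hy : ¬Odd y := by rw [Nat.odd_iff] at hx ⊢; omega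
    rwa [← eq_two_mul_T_of_not_odd hx, ← eq_two_mul_T_of_not_odd hy] at h2

lemma modEq_two_pow_of_parity_iterate_eq {n : ℕ} :
    ∀ {x y : ℕ}, (∀ i < n, T^[i] x % 2 = T^[i] y % 2) → x ≡ y [MOD 2 ^ n] := by
  induction n with
  | zero => exact fun _ => Nat.modEq_one
  | succ n ih =>
    intro x y h
    refine modEq_two_pow_succ_of_T_modEq (h 0 n.succ_pos) (ih fun i hi => ?_)
    simpa only [Function.iterate_succ_apply] using h (i + 1) (by omega)

lemma Nat.ModEq.eq_of_lt_of_le_add {m k a b : ℕ} (h : a ≡ b [MOD m])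
    (ha : k < a) (ha' : a ≤ k + m) (hb : k < b) (hb' : b ≤ k + m) : a = b :=
  h.eq_of_abs_lt (by rw [abs_sub_lt_iff]; omega)

theorem stmt3_general (n L M : ℕ)
    (hL1 : 2 ^ n < L) (hL2 : L ≤ 2 ^ (n + 1))
    (hM1 : 2 ^ n < M) (hM2 : M ≤ 2 ^ (n + 1))
    (h : ∀ i < n, T^[i] L % 2 = T^[i] M % 2) :
    L = M := by
  have hpow : 2 ^ (n + 1) = 2 ^ n + 2 ^ n := by ring
  exact (modEq_two_pow_of_parity_iterate_eq h).eq_of_lt_of_le_add hL1 (by omega) hM1 (by omega)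

theorem stmt3 (n L M : ℕ) (hn : 1 ≤ n)
    (hLodd : Odd L) (hModd : Odd M)
    (hL1 : 2 ^ n < L) (hL2 : L ≤ 2 ^ (n + 1))
    (hM1 : 2 ^ n < M) (hM2 : M ≤ 2 ^ (n + 1))
    (h : ∀ i < n, T^[i] L % 2 = T^[i] M % 2) :
    L = M :=
  stmt3_general n L M hL1 hL2 hM1 hM2 h
end

section
/- Let n ≥ 1. The map sending an odd natural number L with 2^n < L ≤ 2^{n+1} to its parity vector v : Fin n → Bool defined by v(i) = (T^i(L) is odd) is a bijection from the set of odd integers in (2^n, 2^{n+1}] onto the set of vectors v : Fin n → Bool with v(0) = true; in particular both sets have cardinality 2^{n−1}. -/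
theorem Set.MapsTo.bijOn_of_injOn_of_ncard_le {α β : Type*} {f : α → β} {s : Set α} {t : Set β}
    (hf : Set.MapsTo f s t) (hinj : Set.InjOn f s) (ht : t.Finite) (hcard : t.ncard ≤ s.ncard) :
    Set.BijOn f s t :=
  ⟨hf, hinj, (Set.eq_of_subset_of_ncard_le hf.image_subset (by rwa [hinj.ncard_image]) ht).superset⟩

theorem Nat.card_setOf_odd_Ioc_two_mul (a b : ℕ) :
    Nat.card {L : ℕ | Odd L ∧ 2 * a < L ∧ L ≤ 2 * b} = b - a := by
  have himage : {L : ℕ | Odd L ∧ 2 * a < L ∧ L ≤ 2 * b} = (fun k => 2 * k + 1) '' Set.Ico a b := by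
    ext L
    constructor
    · rintro ⟨⟨k, rfl⟩, hlo, hhi⟩
      exact ⟨k, ⟨by omega, by omega⟩, rfl⟩
    · rintro ⟨k, ⟨hlo, hhi⟩, rfl⟩
      refine ⟨odd_two_mul_add_one k, ?_⟩
      dsimp only
      omega
  rw [himage, Nat.card_image_of_injective (fun x y h => by simpa using h), Nat.card_coe_set_eq,
    Set.ncard_eq_toFinset_card', Set.toFinset_Ico, Nat.card_Ico]

theorem Nat.card_setOf_apply_eq {ι α : Type*} [Fintype ι] [Fintype α] (i : ι) (a : α) :
    Nat.card {v : ι → α | v i = a} = Fintype.card α ^ (Fintype.card ι - 1) := by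
  classical
  rw [Nat.card_coe_set_eq, Set.ncard_eq_toFinset_card', ← Finset.card_univ,
    ← Fintype.card_filter_piFinset_const_eq_of_mem _ i (Finset.mem_univ a), Fintype.piFinset_univ]
  simp

theorem two_mul_T (x : ℕ) : 2 * T x = if Odd x then 3 * x + 1 else x := by
  unfold T
  split_ifs with hx
  · obtain ⟨c, rfl⟩ := hx
    omega
  · exact Nat.two_mul_div_two_of_even (Nat.not_odd_iff_even.mp hx)

theorem modEq_two_pow_of_forall_odd_iterate_T_iff {k a b : ℕ}
    (h : ∀ i < k, (Odd (T^[i] a) ↔ Odd (T^[i] b))) : a ≡ b [MOD 2 ^ k] := by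
  induction k generalizing a b with
  | zero => exact Nat.modEq_one
  | succ k ih =>
    have hparity : Odd a ↔ Odd b := h 0 k.succ_pos
    have hT : T a ≡ T b [MOD 2 ^ k] := ih fun i hi => h (i + 1) (by omega)
    have h2T : 2 * T a ≡ 2 * T b [MOD 2 ^ (k + 1)] := by
      rw [pow_succ']
      exact hT.mul_left' 2
    simp only [two_mul_T, hparity] at h2T
    split_ifs at h2T
    · exact (Nat.ModEq.add_right_cancel' 1 h2T).cancel_left_of_coprime
        (Nat.Coprime.pow_left _ (by norm_num))
    · exact h2T

theorem injOn_odd_iterate_T_Ioc (n c : ℕ) :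
    Set.InjOn (fun L : ℕ => fun i : Fin n => decide (Odd (T^[(i : ℕ)] L)))
      (Set.Ioc c (c + 2 ^ n)) := by
  rintro a ⟨ha, ha'⟩ b ⟨hb, hb'⟩ hab
  have hmod : a ≡ b [MOD 2 ^ n] :=
    modEq_two_pow_of_forall_odd_iterate_T_iff fun i hi => by simpa using congrFun hab ⟨i, hi⟩
  generalize 2 ^ n = N at *
  exact hmod.eq_of_abs_lt (abs_sub_lt_iff.mpr ⟨by omega, by omega⟩)

theorem stmt4 (n : ℕ) (hn : 1 ≤ n) :
    Set.BijOn (fun L : ℕ => fun i : Fin n => decide (Odd (T^[(i : ℕ)] L)))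
      {L : ℕ | Odd L ∧ 2 ^ n < L ∧ L ≤ 2 ^ (n + 1)}
      {v : Fin n → Bool | v ⟨0, hn⟩ = true} ∧
    Nat.card {L : ℕ | Odd L ∧ 2 ^ n < L ∧ L ≤ 2 ^ (n + 1)} = 2 ^ (n - 1) ∧
    Nat.card {v : Fin n → Bool | v ⟨0, hn⟩ = true} = 2 ^ (n - 1) := by
  have hpow : 2 ^ n = 2 * 2 ^ (n - 1) := by rw [← pow_succ']; congr; omega
  have cardS : Nat.card {L : ℕ | Odd L ∧ 2 ^ n < L ∧ L ≤ 2 ^ (n + 1)} = 2 ^ (n - 1) := by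
    rw [pow_succ', hpow, Nat.card_setOf_odd_Ioc_two_mul, ← hpow]
    omega
  have cardV : Nat.card {v : Fin n → Bool | v ⟨0, hn⟩ = true} = 2 ^ (n - 1) := by
    simpa using Nat.card_setOf_apply_eq (⟨0, hn⟩ : Fin n) true
  refine ⟨?_, cardS, cardV⟩
  refine Set.MapsTo.bijOn_of_injOn_of_ncard_le (fun L hL => decide_eq_true hL.1) ?_
    (Set.toFinite _) ?_
  · refine (injOn_odd_iterate_T_Ioc n (2 ^ n)).mono ?_
    rintro L ⟨-, hlo, hhi⟩
    exact ⟨hlo, by rwa [← two_mul, ← pow_succ']⟩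
  · rw [← Nat.card_coe_set_eq, ← Nat.card_coe_set_eq, cardS, cardV]
end

section
/- (Lemma 3.1) Let u ≥ 2 be a natural number and write θ = log₂ 3. The set {β ∈ ℕ : β ≥ u and 2^{β−1} > 3^{β−u}} is nonempty and has a greatest element, which equals ⌊(u·θ − 1)/(θ − 1)⌋; moreover this greatest element minus u equals ⌊(u − 1)/(θ − 1)⌋. -/
/-!
Taking base-2 logarithms, `3 ^ a < 2 ^ b` means `a * log₂ 3 < b`, and since `3 ^ a` is odd the
inequality can be relaxed to `a * log₂ 3 ≤ b` whenever `b ≠ 0`. For `β = u + α` the defining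
inequality thus becomes `α * (log₂ 3 - 1) ≤ u - 1`, so the set is the interval
`[u, u + ⌊(u - 1) / (log₂ 3 - 1)⌋]`, and `(u log₂ 3 - 1) / (log₂ 3 - 1) = (u - 1) / (log₂ 3 - 1) + u`.
-/

open Real

lemma one_lt_logb_two_three : 1 < logb 2 3 := by
  rw [lt_logb_iff_rpow_lt one_lt_two three_pos]
  norm_num

lemma three_pow_le_two_pow_iff (a b : ℕ) : 3 ^ a ≤ 2 ^ b ↔ a * logb 2 3 ≤ b := by
  rw [← Nat.cast_le (α := ℝ), Nat.cast_pow, Nat.cast_pow, Nat.cast_ofNat, Nat.cast_ofNat,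
    ← logb_le_logb one_lt_two (by positivity) (by positivity), logb_pow, logb_pow,
    logb_self_eq_one one_lt_two, mul_one]

lemma three_pow_ne_two_pow {a b : ℕ} (hb : b ≠ 0) : 3 ^ a ≠ 2 ^ b := fun h =>
  Nat.not_even_iff_odd.mpr (Odd.pow (by decide)) (h ▸ Nat.even_pow.mpr ⟨even_two, hb⟩)

lemma three_pow_lt_two_pow_iff {a b : ℕ} (hb : b ≠ 0) : 3 ^ a < 2 ^ b ↔ a * logb 2 3 ≤ b := by
  rw [lt_iff_le_and_ne, and_iff_left (three_pow_ne_two_pow hb), three_pow_le_two_pow_iff]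

lemma three_pow_sub_lt_two_pow_pred_iff {u β : ℕ} (hu : 2 ≤ u) (hβ : u ≤ β) :
    3 ^ (β - u) < 2 ^ (β - 1) ↔ β - u ≤ ⌊((u : ℝ) - 1) / (logb 2 3 - 1)⌋₊ := by
  obtain ⟨α, rfl⟩ := Nat.exists_eq_add_of_le hβ
  have hθ : 0 < logb 2 3 - 1 := sub_pos.mpr one_lt_logb_two_three
  have hu' : (2 : ℝ) ≤ u := by exact_mod_cast hu
  rw [Nat.add_sub_cancel_left, three_pow_lt_two_pow_iff (by omega),
    Nat.le_floor_iff (div_nonneg (by linarith) hθ.le), le_div_iff₀ hθ,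
    Nat.cast_sub (by omega), Nat.cast_add, Nat.cast_one]
  constructor <;> intro h <;> linarith

lemma floor_mul_logb_two_three_sub_one_div {u : ℕ} (hu : 1 ≤ u) :
    ⌊((u : ℝ) * logb 2 3 - 1) / (logb 2 3 - 1)⌋₊ =
      ⌊((u : ℝ) - 1) / (logb 2 3 - 1)⌋₊ + u := by
  have hθ : 0 < logb 2 3 - 1 := sub_pos.mpr one_lt_logb_two_three
  have hu' : (1 : ℝ) ≤ u := by exact_mod_cast hu
  have hsplit : ((u : ℝ) * logb 2 3 - 1) / (logb 2 3 - 1) =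
      ((u : ℝ) - 1) / (logb 2 3 - 1) + u := by
    field_simp
    ring
  rw [hsplit, Nat.floor_add_natCast (div_nonneg (by linarith) hθ.le)]

theorem stmt5 (u : ℕ) (hu : 2 ≤ u) :
    {β : ℕ | u ≤ β ∧ 3 ^ (β - u) < 2 ^ (β - 1)}.Nonempty ∧
    ∃ B ∈ {β : ℕ | u ≤ β ∧ 3 ^ (β - u) < 2 ^ (β - 1)},
      (∀ β ∈ {β : ℕ | u ≤ β ∧ 3 ^ (β - u) < 2 ^ (β - 1)}, β ≤ B) ∧
      B = ⌊((u : ℝ) * Real.logb 2 3 - 1) / (Real.logb 2 3 - 1)⌋₊ ∧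
      B - u = ⌊((u : ℝ) - 1) / (Real.logb 2 3 - 1)⌋₊ := by
  set N := ⌊((u : ℝ) - 1) / (logb 2 3 - 1)⌋₊
  have hS : {β : ℕ | u ≤ β ∧ 3 ^ (β - u) < 2 ^ (β - 1)} = Set.Icc u (u + N) := by
    ext β
    simp only [Set.mem_ofPred_eq, Set.mem_Icc]
    refine and_congr_right fun hβ => ?_
    rw [three_pow_sub_lt_two_pow_pred_iff hu hβ]
    omega
  rw [hS, floor_mul_logb_two_three_sub_one_div (by omega)]
  exact ⟨Set.nonempty_Icc.mpr (by omega), u + N, ⟨by omega, le_rfl⟩,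
    fun β hβ => hβ.2, by omega, by omega⟩
end

section
/- (Lemma, Section 3) Define γ(n) to be the number of vectors v : Fin n → Bool such that v(0) = true and there exists m with 1 ≤ m ≤ n and 3^{w_m(v)} < 2^{m−1}, where w_m(v) = #{i < m : v(i) = true}. Then for every n ≥ 1, (γ(n+1) + 2^{n}) / 2^{n+1} ≥ (γ(n) + 2^{n−1}) / 2^{n}, where the quotients are taken in the real numbers. -/
/-!
Every official or non-official Collatz chain of length `n` stays one when a cell of either kind
is appended, since the official initial segment it contains is unaffected. Appending is injective,
so `2 γ(n) ≤ γ(n + 1)`, and for `n ≥ 1` the claimed inequality is exactly this after clearing the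
denominator `2 ^ (n + 1)`.
-/

/-- `gamma n` counts the chains of length `n` (encoded as parity vectors `v : Fin n → Bool`
starting with a `true` entry, i.e. starting with `BA`) that are official or non-official
Collatz chains: some initial segment of length `m` (with `1 ≤ m ≤ n`) satisfies
`3 ^ (w_m v) < 2 ^ (m - 1)`, where `w_m v` is the number of `true` entries among the
first `m` entries. -/
def gamma (n : ℕ) : ℕ :=
  (Finset.univ.filter (fun v : Fin n → Bool =>
    (∀ i : Fin n, (i : ℕ) = 0 → v i = true) ∧
    ∃ m ∈ Finset.Icc 1 n,
      3 ^ ((Finset.univ.filter (fun i : Fin n => (i : ℕ) < m ∧ v i = true)).card)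
        < 2 ^ (m - 1))).card

open Finset

def prefixWeight {n : ℕ} (v : Fin n → Bool) (m : ℕ) : ℕ :=
  #{i : Fin n | (i : ℕ) < m ∧ v i = true}

def IsCollatzChain {n : ℕ} (v : Fin n → Bool) : Prop :=
  (∀ i : Fin n, (i : ℕ) = 0 → v i = true) ∧ ∃ m ∈ Icc 1 n, 3 ^ prefixWeight v m < 2 ^ (m - 1)

open scoped Classical in
lemma gamma_eq_card (n : ℕ) : gamma n = #{v : Fin n → Bool | IsCollatzChain v} := by
  unfold gamma IsCollatzChain prefixWeight
  congr

lemma prefixWeight_snoc {n m : ℕ} (hm : m ≤ n) (v : Fin n → Bool) (b : Bool) :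
    prefixWeight (Fin.snoc v b : Fin (n + 1) → Bool) m = prefixWeight v m := by
  simp only [prefixWeight, card_filter, Fin.sum_univ_castSucc, Fin.snoc_castSucc,
    Fin.val_castSucc, Fin.val_last]
  simp [show ¬ n < m by omega]

lemma IsCollatzChain.snoc {n : ℕ} {v : Fin n → Bool} (hv : IsCollatzChain v) (b : Bool) :
    IsCollatzChain (Fin.snoc v b : Fin (n + 1) → Bool) := by
  obtain ⟨hstart, m, hm, hlt⟩ := hv
  rw [mem_Icc] at hm
  refine ⟨fun i hi => ?_, m, mem_Icc.2 ⟨hm.1, by omega⟩, ?_⟩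
  · have hin : (i : ℕ) < n := by omega
    simpa [Fin.snoc, hin, Fin.castLT] using hstart ⟨i, hin⟩ hi
  · rwa [prefixWeight_snoc hm.2]

lemma two_mul_gamma_le (n : ℕ) : 2 * gamma n ≤ gamma (n + 1) := by
  classical
  rw [gamma_eq_card, gamma_eq_card, mul_comm, ← Fintype.card_bool, ← card_univ, ← card_product]
  refine card_le_card_of_injOn (fun p => Fin.snoc p.1 p.2) ?_ ?_
  · rintro ⟨v, b⟩ hvb
    simp only [coe_product, coe_filter, Set.mem_prod, Set.mem_ofPred_eq, mem_univ,
      true_and] at hvb ⊢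
    exact hvb.1.snoc b
  · rintro ⟨v, b⟩ - ⟨w, c⟩ - h
    obtain ⟨rfl, rfl⟩ := Fin.snoc_injective2 h
    rfl

theorem stmt9 (n : ℕ) (hn : 1 ≤ n) :
    ((gamma (n + 1) : ℝ) + 2 ^ n) / 2 ^ (n + 1) ≥ ((gamma n : ℝ) + 2 ^ (n - 1)) / 2 ^ n := by
  have hdouble : (2 : ℝ) * gamma n ≤ gamma (n + 1) := by exact_mod_cast two_mul_gamma_le n
  have hpow : (2 : ℝ) ^ n = 2 * 2 ^ (n - 1) := by rw [← pow_succ', Nat.sub_add_cancel hn]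
  rw [ge_iff_le, div_le_div_iff₀ (by positivity) (by positivity), pow_succ]
  nlinarith [pow_pos (two_pos : (0 : ℝ) < 2) n]
end

section
/- Let A_1 ⊆ A_2 ⊆ … ⊆ A_n be finite sets with |A_i| = k_i for each i. Then the number of distinct multisets {a_1, a_2, …, a_n} obtainable by choosing a_i ∈ A_i for each i equals the number of monotone nondecreasing tuples (m_1, m_2, …, m_n) of positive integers with m_1 ≤ m_2 ≤ … ≤ m_n and m_i ≤ k_i for each i (equivalently, the nested sum ∑_{m_1=1}^{k_1} ∑_{m_2=m_1}^{k_2} … ∑_{m_n=m_{n−1}}^{k_n} 1). -/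
/-!
Order `X` linearly so that every `A i` is a lower set: first by the (lower) set of indices at
which an element is missing, then by an arbitrary well-order. If `a i ∈ A i` for all `i`, the
sorted tuple `b` still has `b i ∈ A i`, because the lower set `A i` contains `a 0, …, a i`;
so the obtainable multisets are exactly those of monotone tuples `b` with `b i ∈ A i`, and
distinct such tuples give distinct multisets. Finally, ranking the elements of `⋃ i, A i` in
this order maps every `A i` onto `{1, …, k i}` and the tuples `b` onto the tuples `m`.
-/

open Finset

theorem Monotone.exists_linearOrder_isLowerSet {ι X : Type*} [LinearOrder ι] {A : ι → Set X}
    (hA : Monotone A) : ∃ _ : LinearOrder X, ∀ i, IsLowerSet (A i) := by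
  let absent (x : X) : LowerSet ι := ⟨{i | x ∉ A i}, fun _ _ hji hx hxj => hx (hA hji hxj)⟩
  let _ : LinearOrder X := IsWellOrder.linearOrder WellOrderingRel
  let key (x : X) : LowerSet ι ×ₗ X := toLex (absent x, x)
  refine ⟨LinearOrder.lift' key fun x y h => congrArg (fun p => (ofLex p).2) h,
    fun i y x hxy hy => ?_⟩
  have habsent : absent x ≤ absent y := Prod.Lex.monotone_fst _ _ hxy
  by_contra hx
  exact habsent hx hy

namespace Finset

variable {α : Type*} [LinearOrder α]

def rank (s : Finset α) (x : α) : ℕ := #{y ∈ s | y ≤ x}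

theorem rank_strictMonoOn (s : Finset α) : StrictMonoOn s.rank s := by
  intro x _ y hy hxy
  refine card_lt_card ⟨fun z hz => ?_, fun hsub => ?_⟩
  · rw [mem_filter] at hz ⊢
    exact ⟨hz.1, hz.2.trans hxy.le⟩
  · exact hxy.not_ge (mem_filter.mp (hsub (mem_filter.mpr ⟨hy, le_rfl⟩))).2

theorem image_rank_self (s : Finset α) : s.image s.rank = Icc 1 #s := by
  refine eq_of_subset_of_card_le (fun r hr => ?_) ?_
  · obtain ⟨x, hx, rfl⟩ := mem_image.mp hr
    exact mem_Icc.mpr ⟨card_pos.mpr ⟨x, mem_filter.mpr ⟨hx, le_rfl⟩⟩, card_filter_le _ _⟩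
  · rw [card_image_of_injOn s.rank_strictMonoOn.injOn, Nat.card_Icc, Nat.add_sub_cancel]

theorem rank_eq_of_isLowerSet {s t : Finset α} (hts : t ⊆ s) (ht : IsLowerSet (t : Set α))
    {x : α} (hx : x ∈ t) : s.rank x = t.rank x := by
  unfold rank
  congr 1
  ext y
  simp only [mem_filter, and_congr_left_iff]
  exact fun hyx => ⟨fun _ => ht hyx hx, fun hy => hts hy⟩

theorem image_rank_of_isLowerSet {s t : Finset α} (hts : t ⊆ s) (ht : IsLowerSet (t : Set α)) :
    t.image s.rank = Icc 1 #t := by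
  rw [image_congr fun _ hx => rank_eq_of_isLowerSet hts ht hx, image_rank_self]

end Finset

theorem StrictMonoOn.image_comp_setOf_monotone {ι α β : Type*} [Preorder ι] [LinearOrder α]
    [Preorder β] {f : α → β} {S : Set α} (hf : StrictMonoOn f S) {B : ι → Set α}
    (hB : ∀ i, B i ⊆ S) :
    (f ∘ ·) '' {b | Monotone b ∧ ∀ i, b i ∈ B i} = {m | Monotone m ∧ ∀ i, m i ∈ f '' B i} := by
  ext m
  constructor
  · rintro ⟨b, ⟨hmono, hb⟩, rfl⟩
    exact ⟨fun i j hij => hf.monotoneOn (hB i (hb i)) (hB j (hb j)) (hmono hij),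
      fun i => Set.mem_image_of_mem f (hb i)⟩
  · rintro ⟨hmono, hm⟩
    choose b hb hfb using hm
    refine ⟨b, ⟨fun i j hij => ?_, hb⟩, funext hfb⟩
    rw [← hf.le_iff_le (hB i (hb i)) (hB j (hb j)), hfb, hfb]
    exact hmono hij

theorem Set.InjOn.comp_left {ι α β : Type*} {f : α → β} {S : Set α} (hf : Set.InjOn f S) :
    Set.InjOn (f ∘ · : (ι → α) → ι → β) {b | ∀ i, b i ∈ S} :=
  fun _ hb _ hc h => funext fun i => hf (hb i) (hc i) (congrFun h i)

theorem Tuple.sort_mem_of_isLowerSet {α : Type*} [LinearOrder α] {n : ℕ} {L : Set α}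
    (hL : IsLowerSet L) (f : Fin n → α) {i : Fin n} (h : ∀ j ≤ i, f j ∈ L) :
    f (Tuple.sort f i) ∈ L := by
  by_contra hi
  -- Otherwise no sorted entry from position `i` on lies in `L`, leaving only `i` positions
  -- for the `i + 1` entries `f j`, `j ≤ i`.
  have hmaps : Set.MapsTo (Tuple.sort f).symm (Iic i) (Iio i) := by
    intro j hj
    simp only [coe_Iic, coe_Iio, Set.mem_Iic, Set.mem_Iio] at hj ⊢
    by_contra! hij
    have := Tuple.monotone_sort f hij
    simp only [Function.comp_apply, Equiv.apply_symm_apply] at this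
    exact hi (hL this (h j hj))
  have := card_le_card_of_injOn _ hmaps (Tuple.sort f).symm.injective.injOn
  simp [Fin.card_Iic, Fin.card_Iio] at this

theorem injOn_coe_ofFn_setOf_monotone {α : Type*} [PartialOrder α] {n : ℕ} :
    Set.InjOn (fun b : Fin n → α => (↑(List.ofFn b) : Multiset α)) {b | Monotone b} :=
  fun _ hb _ hc h => List.ofFn_injective <|
    (Quotient.exact h).eq_of_pairwise' hb.sortedLE_ofFn.pairwise hc.sortedLE_ofFn.pairwise

def choiceMultisets {X : Type*} {n : ℕ} (A : Fin n → Finset X) : Set (Multiset X) :=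
  {s | ∃ a : Fin n → X, (∀ i, a i ∈ A i) ∧ (↑(List.ofFn a) : Multiset X) = s}

theorem choiceMultisets_eq_image_monotone {α : Type*} [LinearOrder α] {n : ℕ}
    {A : Fin n → Finset α} (hA : Monotone A) (hlower : ∀ i, IsLowerSet (A i : Set α)) :
    choiceMultisets A = (fun b : Fin n → α => (↑(List.ofFn b) : Multiset α)) ''
      {b | Monotone b ∧ ∀ i, b i ∈ A i} := by
  ext s
  constructor
  · rintro ⟨a, ha, rfl⟩
    refine ⟨a ∘ Tuple.sort a, ⟨Tuple.monotone_sort a, fun i => ?_⟩, ?_⟩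
    · exact Tuple.sort_mem_of_isLowerSet (hlower i) a fun j hj => hA hj (ha j)
    · exact Multiset.coe_eq_coe.mpr ((Tuple.sort a).ofFn_comp_perm a)
  · rintro ⟨b, ⟨-, hb⟩, rfl⟩
    exact ⟨b, hb, rfl⟩

theorem stmt10_general {X : Type*} (n : ℕ) (A : Fin n → Finset X) (k : Fin n → ℕ)
    (hchain : ∀ i j : Fin n, i ≤ j → A i ⊆ A j) (hcard : ∀ i, (A i).card = k i) :
    Nat.card {s : Multiset X |
        ∃ a : Fin n → X, (∀ i, a i ∈ A i) ∧ (↑(List.ofFn a) : Multiset X) = s}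
      = Nat.card {m : Fin n → ℕ |
          (∀ i j : Fin n, i ≤ j → m i ≤ m j) ∧ ∀ i, 1 ≤ m i ∧ m i ≤ k i} := by
  have hmono : Monotone A := fun i j => hchain i j
  obtain ⟨_, hlower⟩ := Monotone.exists_linearOrder_isLowerSet (A := fun i => (A i : Set X))
    fun _ _ hij => coe_subset.mpr (hmono hij)
  set S := univ.biUnion A
  have hS : ∀ i, A i ⊆ S := fun i => subset_biUnion_of_mem A (mem_univ i)
  have hranks : (S.rank ∘ ·) '' {b | Monotone b ∧ ∀ i, b i ∈ A i}
      = {m : Fin n → ℕ | (∀ i j : Fin n, i ≤ j → m i ≤ m j) ∧ ∀ i, 1 ≤ m i ∧ m i ≤ k i} := by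
    refine (S.rank_strictMonoOn.image_comp_setOf_monotone
      (B := fun i => (A i : Set X)) fun i => coe_subset.mpr (hS i)).trans ?_
    simp only [← coe_image, image_rank_of_isLowerSet (hS _) (hlower _), hcard, coe_Icc,
      Set.mem_Icc]
    rfl
  have hinj : Set.InjOn (S.rank ∘ · : (Fin n → X) → Fin n → ℕ)
      {b | Monotone b ∧ ∀ i, b i ∈ A i} :=
    S.rank_strictMonoOn.injOn.comp_left.mono fun _ hb i => hS i (hb.2 i)
  change Nat.card (choiceMultisets A) = _
  rw [choiceMultisets_eq_image_monotone hmono hlower, ← hranks, Nat.card_image_of_injOn hinj,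
    Nat.card_image_of_injOn (injOn_coe_ofFn_setOf_monotone.mono fun _ hb => hb.1)]

theorem stmt10 {X : Type*} [DecidableEq X] (n : ℕ) (A : Fin n → Finset X) (k : Fin n → ℕ)
    (hchain : ∀ i j : Fin n, i ≤ j → A i ⊆ A j) (hcard : ∀ i, (A i).card = k i) :
    Nat.card {s : Multiset X |
        ∃ a : Fin n → X, (∀ i, a i ∈ A i) ∧ (↑(List.ofFn a) : Multiset X) = s}
      = Nat.card {m : Fin n → ℕ |
          (∀ i j : Fin n, i ≤ j → m i ≤ m j) ∧ ∀ i, 1 ≤ m i ∧ m i ≤ k i} :=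
  stmt10_general n A k hchain hcard
end

section
/- (Formula (6) for g(n)) Let n ≥ 7 be a natural number, and let d = n − ⌊(n−1)·log₃2⌋. Then the set of natural numbers K ≥ 1 satisfying (n−1) < (⌈(K−1)/K⌉ + n − 2K − 1)·log₂3 is nonempty, and its greatest element equals ⌊(d + √(d² − 8))/4⌋. -/
/-!
Write `L = log₂ 3` and `m = ⌊(n - 1) log₃ 2⌋`. Since `⌈(K - 1)/K⌉` is `0` for `K = 1` and `1` for
`K ≥ 2`, the coefficient of `L` is an integer `t K`, and `n - 1 < t K · L` holds exactly when
`m < t K`. For `K ≥ 2` this reads `2K + m + 1 ≤ n`, i.e. `K ≤ (d - 1)/2` with `d = n - m`, while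
`K = 1` belongs to the set as soon as `n ≥ 7` because `L > 19/12`. Finally `(d - 1)/2` is
`⌊(d + √(d² - 8))/4⌋`, since `√(d² - 8)` lies in `[4k - d, d)` for `k = (d - 1)/2`.
-/

open Real

lemma nineteen_div_twelve_lt_logb_two_three : (19 : ℝ) / 12 < logb 2 3 := by
  have h : logb 2 ((2 : ℝ) ^ 19) < logb 2 ((3 : ℝ) ^ 12) :=
    logb_lt_logb (by norm_num) (by positivity) (by norm_num)
  rw [logb_pow, logb_pow, logb_self_eq_one (by norm_num)] at h
  push_cast at h
  linarith

lemma ceil_natCast_sub_one_div_self {K : ℕ} (hK : 1 ≤ K) :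
    ⌈((K : ℝ) - 1) / K⌉ = min ((K : ℤ) - 1) 1 := by
  obtain rfl | hK2 := hK.eq_or_lt
  · simp
  have hKr : (2 : ℝ) ≤ K := by exact_mod_cast hK2
  rw [min_eq_right (by omega), Int.ceil_eq_iff]
  constructor
  · rw [Int.cast_one, sub_self]
    exact div_pos (by linarith) (by linarith)
  · push_cast
    exact (div_le_one (by linarith)).2 (by linarith)

lemma lt_intCast_mul_iff_natFloor_div_lt {a L : ℝ} (ha : 0 ≤ a) (hL : 0 < L) (t : ℤ) :
    a < t * L ↔ (⌊a / L⌋₊ : ℤ) < t := by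
  rw [← div_lt_iff₀ hL, Int.natCast_floor_eq_floor (div_nonneg ha hL.le), Int.floor_lt]

lemma natFloor_add_sqrt_sq_sub_eight_div_four {d : ℕ} (hd : 3 ≤ d) :
    ⌊((d : ℝ) + √((d : ℝ) ^ 2 - 8)) / 4⌋₊ = (d - 1) / 2 := by
  set k := (d - 1) / 2
  have hk : 1 ≤ (k : ℝ) ∧ 2 * (k : ℝ) + 1 ≤ d ∧ (d : ℝ) ≤ 2 * k + 2 := by
    refine ⟨?_, ?_, ?_⟩ <;> norm_cast <;> omega
  have hlow : 4 * (k : ℝ) - d ≤ √((d : ℝ) ^ 2 - 8) :=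
    (le_abs_self _).trans (abs_le_sqrt (by nlinarith))
  have hupp : √((d : ℝ) ^ 2 - 8) < d := (sqrt_lt' (by linarith)).2 (by linarith)
  rw [Nat.floor_eq_iff (by positivity)]
  constructor <;> linarith

lemma mem_iff_natFloor_lt {n : ℕ} (hn : 1 ≤ n) (K : ℕ) :
    (1 ≤ K ∧ ((n : ℝ) - 1) <
        (((⌈((K : ℝ) - 1) / (K : ℝ)⌉ : ℤ) : ℝ) + (n : ℝ) - 2 * K - 1) * logb 2 3) ↔
      1 ≤ K ∧ (⌊((n : ℝ) - 1) * logb 3 2⌋₊ : ℤ) < min ((K : ℤ) - 1) 1 + n - 2 * K - 1 := by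
  have hL : 0 < logb 2 3 := by linarith [nineteen_div_twelve_lt_logb_two_three]
  have ha : (0 : ℝ) ≤ n - 1 := by
    rw [sub_nonneg]
    exact_mod_cast hn
  rw [← inv_logb 2 3, ← div_eq_mul_inv]
  refine and_congr_right fun hK => ?_
  rw [← lt_intCast_mul_iff_natFloor_div_lt ha hL, ceil_natCast_sub_one_div_self hK]
  push_cast
  rfl

theorem stmt13 (n : ℕ) (hn : 7 ≤ n)
    (d : ℕ) (hd : d = n - ⌊((n : ℝ) - 1) * Real.logb 3 2⌋₊) :
    {K : ℕ | 1 ≤ K ∧ ((n : ℝ) - 1) <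
        (((⌈((K : ℝ) - 1) / (K : ℝ)⌉ : ℤ) : ℝ) + (n : ℝ) - 2 * K - 1) * Real.logb 2 3}.Nonempty ∧
    ∃ G ∈ {K : ℕ | 1 ≤ K ∧ ((n : ℝ) - 1) <
        (((⌈((K : ℝ) - 1) / (K : ℝ)⌉ : ℤ) : ℝ) + (n : ℝ) - 2 * K - 1) * Real.logb 2 3},
      (∀ K ∈ {K : ℕ | 1 ≤ K ∧ ((n : ℝ) - 1) <
          (((⌈((K : ℝ) - 1) / (K : ℝ)⌉ : ℤ) : ℝ) + (n : ℝ) - 2 * K - 1) * Real.logb 2 3}, K ≤ G) ∧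
      G = ⌊((d : ℝ) + Real.sqrt ((d : ℝ) ^ 2 - 8)) / 4⌋₊ := by
  set S := {K : ℕ | 1 ≤ K ∧ ((n : ℝ) - 1) <
      (((⌈((K : ℝ) - 1) / (K : ℝ)⌉ : ℤ) : ℝ) + (n : ℝ) - 2 * K - 1) * Real.logb 2 3}
  set m := ⌊((n : ℝ) - 1) * logb 3 2⌋₊
  have hmem : ∀ K, K ∈ S ↔ _ := mem_iff_natFloor_lt (n := n) (by omega)
  have hone : 1 ∈ S := by
    have hn' : (7 : ℝ) ≤ n := by exact_mod_cast hn
    refine ⟨le_rfl, ?_⟩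
    rw [Nat.cast_one, sub_self, zero_div, Int.ceil_zero, Int.cast_zero]
    nlinarith [nineteen_div_twelve_lt_logb_two_three]
  have hm : m + 4 ≤ n := by
    have := ((hmem 1).1 hone).2
    omega
  refine ⟨⟨1, hone⟩, (d - 1) / 2, (hmem _).2 (by omega), fun K hK => ?_,
    (natFloor_add_sqrt_sq_sub_eight_div_four (by omega)).symm⟩
  have := (hmem K).1 hK
  omega
end
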